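/- arXiv:2208.03241 — 2 statements merged into one kernel-verified Lean document; each statement's English description precedes it below -/
import Mathlib

section
/- Let (X, w) be a weighted pure d-dimensional simplicial complex and let i, k ≥ 0 satisfy i + k + 1 ≤ d. Then for all f, g ∈ C^k(X; ℝ): ⟨f, g⟩ = Σ_{σ ∈ X(i)} w(σ) ⟨f|_σ, g|_σ⟩_{X_σ}, where f|_σ ∈ C^k(X_σ; ℝ) is the restriction of f to X_σ(k) ⊆ X(k) and ⟨·,·⟩_{X_σ} is the inner product taken with respect to the link weights w_σ. -/
/-!
Weighted pure simplicial complexes, links, cochains, signless differentials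
and high dimensional random walk operators.

Conventions: faces are `Finset`s of vertices. A cochain "of dimension `k`"
(an element of `C^k(X;ℝ)`) is represented by a function `Finset V → ℝ`
evaluated on faces of **cardinality** `c = k + 1`; all operators are indexed
by cardinality.
-/

open Finset

namespace HDRW

noncomputable section

variable {V : Type*} [DecidableEq V] [Fintype V]

/-- A weighted family of faces (the data of a weighted complex or of a link). -/
structure WFam (V : Type*) [DecidableEq V] [Fintype V] where
  faces : Finset (Finset V)
  w : Finset V → ℝ

namespace WFam

/-- The faces of cardinality `c` (i.e. of dimension `c - 1`). -/
def dimFaces (Y : WFam V) (c : ℕ) : Finset (Finset V) :=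
  Y.faces.filter fun σ => σ.card = c

/-- The link of a face `τ`, as a weighted family; the weights are
`w_τ(s) = w (s ∪ τ) / (C(|s| + |τ|, |τ|) * w τ)`. -/
def link (Y : WFam V) (τ : Finset V) : WFam V where
  faces := Finset.univ.powerset.filter fun s => Disjoint s τ ∧ s ∪ τ ∈ Y.faces
  w := fun s => Y.w (s ∪ τ) / (((s.card + τ.card).choose τ.card : ℝ) * Y.w τ)

/-- The inner product of two `c`-cochains: `⟨f, g⟩ = Σ_{σ} w σ * f σ * g σ`. -/
def inner (Y : WFam V) (c : ℕ) (f g : Finset V → ℝ) : ℝ :=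
  ∑ σ ∈ Y.dimFaces c, Y.w σ * (f σ * g σ)

/-- The squared norm `‖f‖² = ⟨f, f⟩` of a `c`-cochain. -/
def norm2 (Y : WFam V) (c : ℕ) (f : Finset V → ℝ) : ℝ := Y.inner c f f

end WFam

/-- The signless differential `d` from cochains on faces of cardinality `c`
(dimension `c-1`) to cochains on faces of cardinality `c+1`:
`(d f)(σ) = (1/(c+1)) Σ_{τ ⊆ σ, |τ| = c} f τ`. -/
def sDiff (c : ℕ) (f : Finset V → ℝ) : Finset V → ℝ :=
  fun σ => ((c : ℝ) + 1)⁻¹ * ∑ τ ∈ σ.powerset.filter (fun τ => τ.card = c), f τ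

/-- Iterated signless differential `C_a → C_{a+n}` (in cardinality indexing),
i.e. `d_{a+n-2} ⋯ d_{a-1}` in dimension indexing. -/
def sDiffIter (a : ℕ) : ℕ → (Finset V → ℝ) → (Finset V → ℝ)
  | 0, f => f
  | n + 1, f => sDiff (a + n) (sDiffIter a n f)

namespace WFam

/-- The adjoint `d^*` of the signless differential, from cochains on faces of
cardinality `c+1` to cochains on faces of cardinality `c`; it is given by the
explicit formula `(d^* f)(τ) = Σ_{σ ∈ X(c), τ ⊆ σ} w_τ(σ ∖ τ) * f σ` (a sum
over the cardinality-`(c+1)` faces containing `τ`). -/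
def sAdj (Y : WFam V) (c : ℕ) (f : Finset V → ℝ) : Finset V → ℝ :=
  fun τ => ∑ σ ∈ (Y.dimFaces (c + 1)).filter (fun σ => τ ⊆ σ),
    (Y.link τ).w (σ \ τ) * f σ

/-- Iterated adjoint of the signless differential, `C_{a+n} → C_a`
(in cardinality indexing), i.e. `d_{a-1}^* ⋯ d_{a+n-2}^*`. -/
def sAdjIter (Y : WFam V) : ℕ → ℕ → (Finset V → ℝ) → (Finset V → ℝ)
  | _, 0, f => f
  | a, n + 1, f => Y.sAdj a (sAdjIter Y (a + 1) n f)

/-- The non-lazy up-down random walk operator `M⁺` on cochains of cardinality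
`c` (dimension `k = c-1`): `(M⁺ f)(σ) = (1/(k+1)) Σ_{τ, σ ∪ τ ∈ X(k+1)} w_σ(τ∖σ) f τ`. -/
def nonLazy (Y : WFam V) (c : ℕ) (f : Finset V → ℝ) : Finset V → ℝ :=
  fun σ => (c : ℝ)⁻¹ *
    ∑ τ ∈ (Y.dimFaces c).filter (fun τ => σ ∪ τ ∈ Y.dimFaces (c + 1)),
      (Y.link σ).w (τ \ σ) * f τ

/-- The (lazy) up-down random walk operator `U` on cochains of cardinality `c`
(dimension `k = c-1`):
`(U f)(σ) = (1/(k+2)) f σ + (1/(k+2)) Σ_{τ, σ ∪ τ ∈ X(k+1)} w_σ(τ∖σ) f τ`. -/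
def upDown (Y : WFam V) (c : ℕ) (f : Finset V → ℝ) : Finset V → ℝ :=
  fun σ => ((c : ℝ) + 1)⁻¹ * f σ + ((c : ℝ) + 1)⁻¹ *
    ∑ τ ∈ (Y.dimFaces c).filter (fun τ => σ ∪ τ ∈ Y.dimFaces (c + 1)),
      (Y.link σ).w (τ \ σ) * f τ

/-- The down-up random walk operator `D` on cochains of cardinality `c`
(dimension `k = c-1`). -/
def downUp (Y : WFam V) (c : ℕ) (f : Finset V → ℝ) : Finset V → ℝ :=
  fun σ => (c : ℝ)⁻¹ *
      (∑ τ' ∈ σ.powerset.filter (fun τ' => τ'.card = c - 1), (Y.link τ').w (σ \ τ')) * f σ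
    + (c : ℝ)⁻¹ *
      ∑ τ ∈ (Y.dimFaces c).filter (fun τ => τ ≠ σ ∧ σ ∩ τ ∈ Y.dimFaces (c - 1)),
        (Y.link (σ ∩ τ)).w (τ \ σ) * f τ

/-- The `i`-down-up operator `D^i = d ⋯ d d^* ⋯ d^*` (going down `i+1` steps and
back up) on cochains of cardinality `c` (dimension `k = c-1`); in dimension
indexing this is `D_k^i = d_{k-1} ⋯ d_{k-i-1} d_{k-i-1}^* ⋯ d_{k-1}^*`. -/
def downUpIter (Y : WFam V) (c i : ℕ) (f : Finset V → ℝ) : Finset V → ℝ :=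
  sDiffIter (c - (i + 1)) (i + 1) (Y.sAdjIter (c - (i + 1)) (i + 1) f)

/-- `Y` (through its 1-skeleton) is a `γ`-(one sided) spectral expander:
every function on the vertices orthogonal to the constants has Rayleigh
quotient of the non-lazy random walk at most `γ` (Rayleigh characterization of
"the second largest eigenvalue of `M₀⁺` is at most `γ`"). -/
def isExpander (Y : WFam V) (γ : ℝ) : Prop :=
  ∀ f : Finset V → ℝ, Y.inner 1 f (fun _ => 1) = 0 →
    Y.inner 1 (Y.nonLazy 1 f) f ≤ γ * Y.norm2 1 f

/-- `Y` (through its 1-skeleton) is connected: the eigenvalue `1` of the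
non-lazy random walk `M₀⁺` has multiplicity one, i.e. every nonzero function on
the vertices orthogonal to the constants has Rayleigh quotient strictly
less than `1`. -/
def isConnected (Y : WFam V) : Prop :=
  ∀ f : Finset V → ℝ, Y.inner 1 f (fun _ => 1) = 0 → Y.norm2 1 f ≠ 0 →
    Y.inner 1 (Y.nonLazy 1 f) f < Y.norm2 1 f

/-- `f` is an `i`-level cochain of cardinality `c` (dimension `k = c-1`) with
respect to localization: for every face `σ` of cardinality `i` (i.e. of
dimension `i-1`), the localization `f_σ` is orthogonal to the constants in the
link `X_σ`. -/
def isLevel (Y : WFam V) (i c : ℕ) (f : Finset V → ℝ) : Prop :=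
  ∀ σ ∈ Y.dimFaces i,
    (Y.link σ).inner (c - i) (fun s => f (σ ∪ s)) (fun _ => 1) = 0

/-- `f` is a proper `i`-level cochain of cardinality `c`: it is an `i`-level
cochain which is in addition orthogonal to every `(i+1)`-level cochain. -/
def isProperLevel (Y : WFam V) (i c : ℕ) (f : Finset V → ℝ) : Prop :=
  Y.isLevel i c f ∧ ∀ g : Finset V → ℝ, Y.isLevel (i + 1) c g → Y.inner c f g = 0

end WFam

/-- The coboundary operator on oriented cochains (represented by their values
on the increasing ordering of each face, with respect to a linear order on the
vertices): `(δ f)(σ) = Σ_{j} (-1)^j f(σ ∖ {j-th smallest element of σ})`. -/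
def coboundary {V : Type*} [LinearOrder V] [Fintype V] (f : Finset V → ℝ) :
    Finset V → ℝ :=
  fun σ => ∑ v ∈ σ, (-1 : ℝ) ^ (σ.filter (fun u => u < v)).card * f (σ.erase v)

/-- A weighted pure `d`-dimensional simplicial complex: a downward closed
family of faces, each contained in a face of cardinality `d+1`
(dimension `d`), together with a weight function `w : X → (0, 1]` summing to
`1` on the top faces and satisfying the averaging recurrence on lower faces. -/
structure WSC (V : Type*) [DecidableEq V] [Fintype V] (d : ℕ) extends WFam V where
  empty_mem : ∅ ∈ faces
  down_closed : ∀ ⦃σ⦄, σ ∈ faces → ∀ ⦃τ⦄, τ ⊆ σ → τ ∈ faces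
  isPure : ∀ σ ∈ faces, ∃ σ' ∈ faces, σ ⊆ σ' ∧ σ'.card = d + 1
  w_pos : ∀ σ ∈ faces, 0 < w σ
  w_le_one : ∀ σ ∈ faces, w σ ≤ 1
  w_sum_top : ∑ σ ∈ faces.filter (fun σ => σ.card = d + 1), w σ = 1
  w_down : ∀ τ ∈ faces, τ.card ≤ d →
    w τ = (((d + 1).choose τ.card : ℝ))⁻¹ *
      ∑ σ ∈ faces.filter (fun σ => σ.card = d + 1 ∧ τ ⊆ σ), w σ


variable {d : ℕ}

/-!
Multiplying the link weight `w_σ(s) = w(s ∪ σ) / (C(c + a, a) w σ)` by `w σ` and exchanging the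
two sums, the right-hand side becomes `Σ_s f s g s · Σ_σ w(s ∪ σ) / C(c + a, a)`, the inner sum
running over the `a`-faces `σ` extending `s`. That inner sum of `w(s ∪ σ)` is `C(c + a, a) w s`:
expanding every weight over the top faces containing it, each top face `ρ ⊇ s` is counted once for
every `a`-subset of `ρ \ s`, and `C(d+1, c+a) C(c+a, a) = C(d+1, c) C(d+1-c, a)`.
-/

namespace WSC

variable (X : WSC V d)

theorem sum_w_top_superset {τ : Finset V} (hτ : τ ∈ X.faces) (hτd : τ.card ≤ d + 1) :
    ∑ ρ ∈ X.faces.filter (fun ρ => ρ.card = d + 1 ∧ τ ⊆ ρ), X.w ρ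
      = (d + 1).choose τ.card * X.w τ := by
  rcases hτd.lt_or_eq with hlt | heq
  · rw [X.w_down τ hτ (Nat.lt_succ_iff.mp hlt), mul_inv_cancel_left₀]
    exact_mod_cast (Nat.choose_pos hτd).ne'
  · have htop : X.faces.filter (fun ρ => ρ.card = d + 1 ∧ τ ⊆ ρ) = {τ} := by
      ext ρ
      simp only [mem_filter, mem_singleton]
      constructor
      · rintro ⟨-, hρ, hτρ⟩
        exact (eq_of_subset_of_card_le hτρ (by omega)).symm
      · rintro rfl
        exact ⟨hτ, heq, subset_rfl⟩
    simp [htop, heq]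

theorem mem_extension_and_mem_top_iff {s b ρ : Finset V} {a : ℕ} :
    (b ∈ (X.dimFaces a).filter (fun b => Disjoint s b ∧ s ∪ b ∈ X.faces) ∧
        ρ ∈ X.faces.filter (fun ρ => ρ.card = d + 1 ∧ s ∪ b ⊆ ρ)) ↔
      (b ∈ (ρ \ s).powersetCard a ∧ ρ ∈ X.faces.filter (fun ρ => ρ.card = d + 1 ∧ s ⊆ ρ)) := by
  simp only [WFam.dimFaces, mem_filter, mem_powersetCard, subset_sdiff, union_subset_iff]
  constructor
  · rintro ⟨⟨⟨-, hb⟩, hsb, -⟩, hρ, hρd, hsρ, hbρ⟩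
    exact ⟨⟨⟨hbρ, hsb.symm⟩, hb⟩, hρ, hρd, hsρ⟩
  · rintro ⟨⟨⟨hbρ, hbs⟩, hb⟩, hρ, hρd, hsρ⟩
    exact ⟨⟨⟨X.down_closed hρ hbρ, hb⟩, hbs.symm, X.down_closed hρ (union_subset hsρ hbρ)⟩,
      hρ, hρd, hsρ, hbρ⟩

theorem sum_w_union_disjoint {s : Finset V} (hs : s ∈ X.faces) {a : ℕ}
    (hsa : s.card + a ≤ d + 1) :
    ∑ b ∈ (X.dimFaces a).filter (fun b => Disjoint s b ∧ s ∪ b ∈ X.faces), X.w (s ∪ b)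
      = (s.card + a).choose a * X.w s := by
  have hC : ((d + 1).choose (s.card + a) : ℝ) ≠ 0 := by
    exact_mod_cast (Nat.choose_pos hsa).ne'
  have hchoose : ((d + 1).choose (s.card + a) : ℝ) * (s.card + a).choose a
      = (d + 1).choose s.card * (d + 1 - s.card).choose a := by
    have h := Nat.choose_mul (n := d + 1) (Nat.le_add_right s.card a)
    rw [Nat.add_sub_cancel_left, Nat.choose_symm_add] at h
    exact_mod_cast h
  apply mul_left_cancel₀ hC
  calc ((d + 1).choose (s.card + a) : ℝ) *
        ∑ b ∈ (X.dimFaces a).filter (fun b => Disjoint s b ∧ s ∪ b ∈ X.faces), X.w (s ∪ b)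
      = ∑ b ∈ (X.dimFaces a).filter (fun b => Disjoint s b ∧ s ∪ b ∈ X.faces),
          ∑ ρ ∈ X.faces.filter (fun ρ => ρ.card = d + 1 ∧ s ∪ b ⊆ ρ), X.w ρ := by
        rw [mul_sum]
        refine sum_congr rfl fun b hb => ?_
        obtain ⟨hbX, hsb, hsbX⟩ := mem_filter.mp hb
        have hba : b.card = a := (mem_filter.mp hbX).2
        have hcard : (s ∪ b).card = s.card + a := by rw [card_union_of_disjoint hsb, hba]
        rw [X.sum_w_top_superset hsbX (hcard ▸ hsa), hcard]
    _ = ∑ ρ ∈ X.faces.filter (fun ρ => ρ.card = d + 1 ∧ s ⊆ ρ),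
          ∑ _b ∈ (ρ \ s).powersetCard a, X.w ρ :=
        sum_comm' fun _ _ => X.mem_extension_and_mem_top_iff
    _ = (d + 1 - s.card).choose a *
          ∑ ρ ∈ X.faces.filter (fun ρ => ρ.card = d + 1 ∧ s ⊆ ρ), X.w ρ := by
        rw [mul_sum]
        refine sum_congr rfl fun ρ hρ => ?_
        obtain ⟨-, hρd, hsρ⟩ := mem_filter.mp hρ
        rw [sum_const, card_powersetCard, card_sdiff_of_subset hsρ, hρd, nsmul_eq_mul]
    _ = ((d + 1).choose (s.card + a) : ℝ) * ((s.card + a).choose a * X.w s) := by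
        rw [X.sum_w_top_superset hs (by omega)]
        linear_combination (-X.w s) * hchoose

theorem link_dimFaces (σ : Finset V) (c : ℕ) :
    (X.link σ).dimFaces c = (X.dimFaces c).filter (fun s => Disjoint s σ ∧ s ∪ σ ∈ X.faces) := by
  ext s
  simp only [WFam.dimFaces, WFam.link, mem_filter, mem_powerset, subset_univ, true_and]
  exact ⟨fun ⟨⟨hsσ, hX⟩, hc⟩ => ⟨⟨X.down_closed hX subset_union_left, hc⟩, hsσ, hX⟩,
    fun ⟨⟨_, hc⟩, hsσ, hX⟩ => ⟨⟨hsσ, hX⟩, hc⟩⟩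

theorem w_mul_link_inner {σ : Finset V} {a : ℕ} (hσ : σ ∈ X.dimFaces a) (c : ℕ)
    (f g : Finset V → ℝ) :
    X.w σ * (X.link σ).inner c f g =
      ∑ s ∈ (X.dimFaces c).filter (fun s => Disjoint s σ ∧ s ∪ σ ∈ X.faces),
        X.w (s ∪ σ) / (c + a).choose a * (f s * g s) := by
  obtain ⟨hσX, hσa⟩ := mem_filter.mp hσ
  have hw : X.w σ ≠ 0 := (X.w_pos σ hσX).ne'
  rw [WFam.inner, link_dimFaces, mul_sum]
  refine sum_congr rfl fun s hs => ?_
  obtain ⟨-, hsc⟩ := mem_filter.mp (mem_filter.mp hs).1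
  simp only [WFam.link, hsc, hσa]
  field_simp

end WSC

theorem inner_eq_sum_restriction_general (X : WSC V d) (a c : ℕ)
    (h : a + c ≤ d + 1) (f g : Finset V → ℝ) :
    X.toWFam.inner c f g =
      ∑ σ ∈ X.toWFam.dimFaces a, X.toWFam.w σ * (X.toWFam.link σ).inner c f g := by
  have hC : ((c + a).choose a : ℝ) ≠ 0 := by
    exact_mod_cast (Nat.choose_pos (Nat.le_add_left a c)).ne'
  calc X.toWFam.inner c f g
      = ∑ s ∈ X.dimFaces c,
          ∑ σ ∈ (X.dimFaces a).filter (fun σ => Disjoint s σ ∧ s ∪ σ ∈ X.faces),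
            X.w (s ∪ σ) / (c + a).choose a * (f s * g s) := by
        refine sum_congr rfl fun s hs => ?_
        obtain ⟨hsX, rfl⟩ := mem_filter.mp hs
        rw [← sum_mul, ← sum_div, X.sum_w_union_disjoint hsX (by omega),
          mul_div_cancel_left₀ _ hC]
    _ = ∑ σ ∈ X.dimFaces a,
          ∑ s ∈ (X.dimFaces c).filter (fun s => Disjoint s σ ∧ s ∪ σ ∈ X.faces),
            X.w (s ∪ σ) / (c + a).choose a * (f s * g s) :=
        sum_comm' fun _ _ => by simp only [mem_filter]; tauto
    _ = _ := sum_congr rfl fun σ hσ => (X.w_mul_link_inner hσ c f g).symm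

/-- For `i, k ≥ 0` with `i + k + 1 ≤ d` (here `a = i + 1`,
`c = k + 1`, so `a + c ≤ d + 1`) and all `f, g ∈ C^k(X;ℝ)`:
`⟨f, g⟩ = Σ_{σ ∈ X(i)} w σ ⟨f|_σ, g|_σ⟩_{X_σ}`, where `f|_σ ∈ C^k(X_σ;ℝ)` is
the restriction of `f` to `X_σ(k) ⊆ X(k)` and the local inner product is taken
with respect to the link weights `w_σ`. -/
theorem inner_eq_sum_restriction (X : WSC V d) (a c : ℕ) (ha : 1 ≤ a) (hc1 : 1 ≤ c)
    (h : a + c ≤ d + 1) (f g : Finset V → ℝ) :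
    X.toWFam.inner c f g =
      ∑ σ ∈ X.toWFam.dimFaces a, X.toWFam.w σ * (X.toWFam.link σ).inner c f g :=
  inner_eq_sum_restriction_general X a c h f g

end

end HDRW
end

section
/- Let (X, w) be a weighted pure d-dimensional simplicial complex and let 0 ≤ i < j ≤ d−1. Then for all f, g ∈ C^j(X; ℝ): ⟨M_j^+ f, g⟩ = Σ_{σ ∈ X(i)} w(σ) ⟨M^+_{j−i−1} f_σ, g_σ⟩_{X_σ}, where M^+_{j−i−1} on the right-hand side is the non-lazy up-down walk operator of the link X_σ (defined with the link weights w_σ) and ⟨·,·⟩_{X_σ} is the inner product with respect to w_σ. In other words, localization respects the non-lazy up-down random walk. -/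
/-!
Weighted pure simplicial complexes, links, cochains, signless differentials
and high dimensional random walk operators.

Conventions: faces are `Finset`s of vertices. A cochain "of dimension `k`"
(an element of `C^k(X;ℝ)`) is represented by a function `Finset V → ℝ`
evaluated on faces of **cardinality** `c = k + 1`; all operators are indexed
by cardinality.
-/

open Finset

namespace HDRW

noncomputable section

variable {V : Type*} [DecidableEq V] [Fintype V]

/-!
Both sides are sums over ordered pairs `σ, τ` of `j`-faces spanning a `(j+1)`-face, weighted by
`w (σ ∪ τ)`. On the left, `w σ · w_σ (τ ∖ σ) = w (σ ∪ τ) / (j + 2)`. On the right, writing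
`σ = ρ ⊔ s`, `τ = ρ ⊔ t` with `ρ ∈ X(i)`, one has `w ρ · w_ρ (s ∪ t) = w (σ ∪ τ) / C(j+2, i+1)`,
and each pair occurs once for each of the `C(j, i+1)` faces `ρ ⊆ σ ∩ τ`. The coefficients agree
because `C(j, i+1) / ((j+1)(j+2)) = 1 / ((j-i)(j-i+1) C(j+2, i+1))`.
-/

lemma choose_add_two_mul (a b : ℕ) :
    (a + b).choose a * ((a + b + 1) * (a + b + 2)) =
      (a + b + 2).choose a * ((b + 1) * (b + 2)) := by
  have h₁ := Nat.choose_mul_succ_eq (a + b) a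
  have h₂ := Nat.choose_mul_succ_eq (a + b + 1) a
  rw [show a + b + 1 - a = b + 1 by omega] at h₁
  rw [show a + b + 1 + 1 - a = b + 2 by omega] at h₂
  calc (a + b).choose a * ((a + b + 1) * (a + b + 2))
      = (a + b).choose a * (a + b + 1) * (a + b + 2) := by ring
    _ = (a + b + 1).choose a * (a + b + 1 + 1) * (b + 1) := by rw [h₁]; ring
    _ = (a + b + 2).choose a * ((b + 1) * (b + 2)) := by rw [h₂]; ring

lemma cast_choose_mul_inv_choose_add_two (a b : ℕ) :
    ((a + b).choose a : ℝ) * (((b + 1 : ℝ) * (b + 2))⁻¹ * ((a + b + 2).choose a : ℝ)⁻¹) =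
      ((a + b + 1 : ℝ) * (a + b + 2))⁻¹ := by
  have h : ((a + b).choose a : ℝ) * ((a + b + 1) * (a + b + 2)) =
      (a + b + 2).choose a * ((b + 1) * (b + 2)) := by
    exact_mod_cast choose_add_two_mul a b
  have : ((a + b + 2).choose a : ℝ) ≠ 0 := Nat.cast_ne_zero.2 (Nat.choose_pos (by omega)).ne'
  field_simp
  linear_combination h

-- For `a = i + 1` and `a + b = j`, this is `1 / ((j-i)(j-i+1) C(j+2, i+1))`.
def localizationCoeff (a b : ℕ) : ℝ :=
  ((b + 1 : ℝ) * (b + 2))⁻¹ * ((a + b + 2).choose a : ℝ)⁻¹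

namespace WFam

def upPairs (Y : WFam V) (c : ℕ) : Finset (Finset V × Finset V) :=
  (Y.dimFaces c ×ˢ Y.dimFaces c).filter fun p => p.1 ∪ p.2 ∈ Y.dimFaces (c + 1)

variable {Y : WFam V}

lemma mem_dimFaces {σ : Finset V} {c : ℕ} : σ ∈ Y.dimFaces c ↔ σ ∈ Y.faces ∧ σ.card = c :=
  mem_filter

lemma mem_upPairs {c : ℕ} {p : Finset V × Finset V} :
    p ∈ Y.upPairs c ↔
      p.1 ∈ Y.dimFaces c ∧ p.2 ∈ Y.dimFaces c ∧ p.1 ∪ p.2 ∈ Y.dimFaces (c + 1) := by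
  rw [upPairs, mem_filter, mem_product, and_assoc]

lemma mem_link_dimFaces {ρ s : Finset V} {n : ℕ} :
    s ∈ (Y.link ρ).dimFaces n ↔ Disjoint s ρ ∧ s ∪ ρ ∈ Y.faces ∧ s.card = n := by
  simp [dimFaces, link, and_assoc]

lemma sdiff_mem_link_dimFaces_iff {ρ σ : Finset V} (h : ρ ⊆ σ) {n : ℕ} :
    σ \ ρ ∈ (Y.link ρ).dimFaces n ↔ σ ∈ Y.dimFaces (ρ.card + n) := by
  rw [mem_link_dimFaces, mem_dimFaces, sdiff_union_of_subset h, card_sdiff_of_subset h]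
  have := card_le_card h
  simp only [sdiff_disjoint, true_and]
  exact and_congr_right fun _ => by omega

lemma sdiff_mem_link_upPairs_iff {ρ : Finset V} {p : Finset V × Finset V}
    (h₁ : ρ ⊆ p.1) (h₂ : ρ ⊆ p.2) {n : ℕ} :
    (p.1 \ ρ, p.2 \ ρ) ∈ (Y.link ρ).upPairs n ↔ p ∈ Y.upPairs (ρ.card + n) := by
  simp only [mem_upPairs, ← union_sdiff_distrib,
    sdiff_mem_link_dimFaces_iff h₁, sdiff_mem_link_dimFaces_iff h₂,
    sdiff_mem_link_dimFaces_iff (h₁.trans subset_union_left)]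
  rfl

lemma card_inter_add_one_of_mem_upPairs {c : ℕ} {p : Finset V × Finset V}
    (hp : p ∈ Y.upPairs c) : (p.1 ∩ p.2).card + 1 = c := by
  obtain ⟨h₁, h₂, h₁₂⟩ := mem_upPairs.1 hp
  rw [mem_dimFaces] at h₁ h₂ h₁₂
  have := card_inter_add_card_union p.1 p.2
  omega

lemma w_mul_link_w {ρ : Finset V} (hρ : Y.w ρ ≠ 0) (s : Finset V) :
    Y.w ρ * (Y.link ρ).w s = Y.w (s ∪ ρ) / (s.card + ρ.card).choose ρ.card := by
  simp only [link]
  field_simp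

lemma w_mul_link_w_sdiff {σ τ : Finset V} (hσ : Y.w σ ≠ 0)
    (h : (σ ∪ τ).card = σ.card + 1) :
    Y.w σ * (Y.link σ).w (τ \ σ) = Y.w (σ ∪ τ) / (σ.card + 1) := by
  rw [w_mul_link_w hσ, card_sdiff_add_card, sdiff_union_self_eq_union, union_comm τ, h,
    Nat.choose_succ_self_right, Nat.cast_succ]

lemma link_w_ne_zero {ρ s : Finset V} (hρ : Y.w ρ ≠ 0) (hs : Y.w (s ∪ ρ) ≠ 0) :
    (Y.link ρ).w s ≠ 0 :=
  div_ne_zero hs (mul_ne_zero (Nat.cast_ne_zero.2 (Nat.choose_pos le_add_self).ne') hρ)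

lemma inner_nonLazy_eq_sum_upPairs {c : ℕ} (hY : ∀ σ ∈ Y.dimFaces c, Y.w σ ≠ 0)
    (f g : Finset V → ℝ) :
    Y.inner c (Y.nonLazy c f) g =
      ∑ p ∈ Y.upPairs c, Y.w (p.1 ∪ p.2) / (c * (c + 1)) * (f p.2 * g p.1) := by
  simp only [WFam.inner, nonLazy, upPairs]
  rw [sum_filter, sum_product]
  refine sum_congr rfl fun σ hσ => ?_
  rw [← sum_filter, mul_sum, sum_mul, mul_sum]
  refine sum_congr rfl fun τ hτ => ?_
  have hσc := (mem_dimFaces.1 hσ).2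
  have h := w_mul_link_w_sdiff (hY σ hσ)
    (by rw [(mem_dimFaces.1 (mem_filter.1 hτ).2).2, hσc] : (σ ∪ τ).card = σ.card + 1)
  rw [hσc] at h
  rw [← div_div]
  linear_combination ((c : ℝ)⁻¹ * f τ * g σ) * h

lemma sum_upPairs_superset_eq_sum_link (ρ : Finset V) (n : ℕ)
    (F : Finset V × Finset V → ℝ) :
    ∑ p ∈ (Y.upPairs (ρ.card + n)).filter (fun p => ρ ⊆ p.1 ∩ p.2), F p =
      ∑ q ∈ (Y.link ρ).upPairs n, F (ρ ∪ q.1, ρ ∪ q.2) := by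
  have sdiff_then_union : ∀ p ∈ (Y.upPairs (ρ.card + n)).filter fun p => ρ ⊆ p.1 ∩ p.2,
      (ρ ∪ p.1 \ ρ, ρ ∪ p.2 \ ρ) = p := by
    intro p hp
    obtain ⟨h₁, h₂⟩ := subset_inter_iff.1 (mem_filter.1 hp).2
    rw [union_sdiff_of_subset h₁, union_sdiff_of_subset h₂]
  have union_then_sdiff : ∀ q ∈ (Y.link ρ).upPairs n, ((ρ ∪ q.1) \ ρ, (ρ ∪ q.2) \ ρ) = q := by
    intro q hq
    obtain ⟨h₁, h₂, -⟩ := mem_upPairs.1 hq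
    rw [union_sdiff_cancel_left (mem_link_dimFaces.1 h₁).1.symm,
      union_sdiff_cancel_left (mem_link_dimFaces.1 h₂).1.symm]
  refine sum_nbij' (fun p => (p.1 \ ρ, p.2 \ ρ)) (fun q => (ρ ∪ q.1, ρ ∪ q.2))
    (fun p hp => ?_) (fun q hq => ?_) sdiff_then_union union_then_sdiff
    (fun p hp => by rw [sdiff_then_union p hp])
  · obtain ⟨hp, hρp⟩ := mem_filter.1 hp
    obtain ⟨h₁, h₂⟩ := subset_inter_iff.1 hρp
    exact (sdiff_mem_link_upPairs_iff h₁ h₂).2 hp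
  · refine mem_filter.2 ⟨(sdiff_mem_link_upPairs_iff subset_union_left subset_union_left).1 ?_,
      subset_inter subset_union_left subset_union_left⟩
    rwa [union_then_sdiff q hq]

lemma sum_upPairs_powersetCard_eq_sum_link
    (hY : ∀ ⦃σ⦄, σ ∈ Y.faces → ∀ ⦃τ⦄, τ ⊆ σ → τ ∈ Y.faces) (a n : ℕ)
    (F : Finset V → Finset V × Finset V → ℝ) :
    ∑ p ∈ Y.upPairs (a + n), ∑ ρ ∈ powersetCard a (p.1 ∩ p.2), F ρ p =
      ∑ ρ ∈ Y.dimFaces a, ∑ q ∈ (Y.link ρ).upPairs n, F ρ (ρ ∪ q.1, ρ ∪ q.2) := by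
  rw [sum_comm' (t' := Y.dimFaces a)
    (s' := fun ρ => (Y.upPairs (a + n)).filter fun p => ρ ⊆ p.1 ∩ p.2)]
  · refine sum_congr rfl fun ρ hρ => ?_
    obtain ⟨-, rfl⟩ := mem_dimFaces.1 hρ
    exact sum_upPairs_superset_eq_sum_link ρ n (F ρ)
  · intro p ρ
    rw [mem_filter, mem_powersetCard, mem_dimFaces]
    constructor
    · rintro ⟨hp, hρp, hρa⟩
      exact ⟨⟨hp, hρp⟩, hY (mem_dimFaces.1 (mem_upPairs.1 hp).1).1
        (hρp.trans inter_subset_left), hρa⟩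
    · rintro ⟨⟨hp, hρp⟩, -, hρa⟩
      exact ⟨hp, hρp, hρa⟩

lemma inner_nonLazy_eq_sum_powersetCard {a b : ℕ}
    (hY : ∀ σ ∈ Y.dimFaces (a + b + 1), Y.w σ ≠ 0) (f g : Finset V → ℝ) :
    Y.inner (a + b + 1) (Y.nonLazy (a + b + 1) f) g =
      ∑ p ∈ Y.upPairs (a + b + 1), ∑ _ρ ∈ powersetCard a (p.1 ∩ p.2),
        localizationCoeff a b * Y.w (p.1 ∪ p.2) * (f p.2 * g p.1) := by
  rw [inner_nonLazy_eq_sum_upPairs hY]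
  refine sum_congr rfl fun p hp => ?_
  have := card_inter_add_one_of_mem_upPairs hp
  rw [sum_const, card_powersetCard, nsmul_eq_mul, show (p.1 ∩ p.2).card = a + b by omega,
    localizationCoeff]
  push_cast
  linear_combination (-(Y.w (p.1 ∪ p.2) * (f p.2 * g p.1))) *
    cast_choose_mul_inv_choose_add_two a b

lemma w_mul_inner_link_nonLazy {ρ : Finset V} {b : ℕ} (hρ : Y.w ρ ≠ 0)
    (hY : ∀ s ∈ (Y.link ρ).dimFaces (b + 1), Y.w (s ∪ ρ) ≠ 0) (f g : Finset V → ℝ) :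
    Y.w ρ * (Y.link ρ).inner (b + 1)
        ((Y.link ρ).nonLazy (b + 1) fun s => f (ρ ∪ s)) (fun s => g (ρ ∪ s)) =
      ∑ q ∈ (Y.link ρ).upPairs (b + 1), localizationCoeff ρ.card b *
        Y.w ((ρ ∪ q.1) ∪ (ρ ∪ q.2)) * (f (ρ ∪ q.2) * g (ρ ∪ q.1)) := by
  rw [inner_nonLazy_eq_sum_upPairs fun s hs => link_w_ne_zero hρ (hY s hs), mul_sum]
  refine sum_congr rfl fun q hq => ?_
  have hw := w_mul_link_w hρ (q.1 ∪ q.2)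
  rw [(mem_link_dimFaces.1 (mem_upPairs.1 hq).2.2).2.2,
    show b + 1 + 1 + ρ.card = ρ.card + b + 2 by omega] at hw
  rw [← union_union_distrib_left, union_comm ρ (q.1 ∪ q.2), localizationCoeff]
  push_cast
  linear_combination (f (ρ ∪ q.2) * g (ρ ∪ q.1) / ((b + 1) * (b + 2))) * hw

end WFam

variable {d : ℕ}

theorem nonLazy_respects_localization_general (X : WSC V d) (a c : ℕ)
    (hac : a < c) (f g : Finset V → ℝ) :
    X.toWFam.inner c (X.toWFam.nonLazy c f) g =
      ∑ σ ∈ X.toWFam.dimFaces a,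
        X.toWFam.w σ * (X.toWFam.link σ).inner (c - a)
          ((X.toWFam.link σ).nonLazy (c - a) (fun s => f (σ ∪ s)))
          (fun s => g (σ ∪ s)) := by
  open WFam in
  obtain ⟨b, rfl⟩ : ∃ b, c = a + b + 1 := ⟨c - a - 1, by omega⟩
  rw [show a + b + 1 - a = b + 1 by omega]
  have hw : ∀ σ ∈ X.faces, X.w σ ≠ 0 := fun σ hσ => (X.w_pos σ hσ).ne'
  calc X.inner (a + b + 1) (X.nonLazy (a + b + 1) f) g
      = ∑ p ∈ X.upPairs (a + b + 1), ∑ _ρ ∈ powersetCard a (p.1 ∩ p.2),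
          localizationCoeff a b * X.w (p.1 ∪ p.2) * (f p.2 * g p.1) :=
        inner_nonLazy_eq_sum_powersetCard (fun σ hσ => hw σ (mem_dimFaces.1 hσ).1) f g
    _ = ∑ ρ ∈ X.dimFaces a, ∑ q ∈ (X.link ρ).upPairs (b + 1), localizationCoeff a b *
          X.w ((ρ ∪ q.1) ∪ (ρ ∪ q.2)) * (f (ρ ∪ q.2) * g (ρ ∪ q.1)) :=
        sum_upPairs_powersetCard_eq_sum_link X.down_closed a (b + 1) _
    _ = _ := by
        refine sum_congr rfl fun ρ hρ => ?_
        obtain ⟨hρF, rfl⟩ := mem_dimFaces.1 hρ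
        exact (w_mul_inner_link_nonLazy (hw ρ hρF)
          (fun s hs => hw _ (mem_link_dimFaces.1 hs).2.1) f g).symm

/-- For `0 ≤ i < j ≤ d - 1` (here `a = i + 1 ≥ 1`,
`c = j + 1 ≤ d`) and all `f, g ∈ C^j(X;ℝ)`:
`⟨M_j^+ f, g⟩ = Σ_{σ ∈ X(i)} w σ ⟨M^+_{j-i-1} f_σ, g_σ⟩_{X_σ}`, where
`M^+_{j-i-1}` on the right-hand side is the non-lazy up-down walk operator of
the link `X_σ` (with the link weights `w_σ`); i.e. localization respects the
non-lazy up-down random walk. -/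
theorem nonLazy_respects_localization (X : WSC V d) (a c : ℕ) (ha : 1 ≤ a)
    (hac : a < c) (hc : c ≤ d) (f g : Finset V → ℝ) :
    X.toWFam.inner c (X.toWFam.nonLazy c f) g =
      ∑ σ ∈ X.toWFam.dimFaces a,
        X.toWFam.w σ * (X.toWFam.link σ).inner (c - a)
          ((X.toWFam.link σ).nonLazy (c - a) (fun s => f (σ ∪ s)))
          (fun s => g (σ ∪ s)) :=
  nonLazy_respects_localization_general X a c hac f g

end

end HDRW
end
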